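/- Suppose U = {u} is a singleton and b_{p,q}(u) = d_p for all p,q ∈ [r], where d₁,…,d_r ≥ 0 and Σ_p d_p = 1. Let c = Σ_{p,q ∈ [r]} ζ_{p,q}(u) and let Φ = Σ_{q=1}^r d_q·Ψ_q. Then c is a standard circular element with respect to Φ: for every m ≥ 1 and ε₁,…,ε_m ∈ {1,*}, Φ(c^{ε₁}⋯c^{ε_m}) = φ₀(c₀^{ε₁}⋯c₀^{ε_m}), where c₀ is a standard circular operator on the full Fock space over a two-element set with vacuum state φ₀. -/

import Mathlib

noncomputable section

/-- A letter of a word in the matricially free Fock space of tracial type. -/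
abbrev MLetter (r : ℕ) (L : Type*) := (Fin r × Fin r) × L

/-- A finite nonempty chained word with letters in `J × L`. -/
structure MWord (r : ℕ) (J : Set (Fin r × Fin r)) (L : Type*) where
  head : MLetter r L
  tail : List (MLetter r L)
  headJ : head.1 ∈ J
  tailJ : ∀ x ∈ tail, x.1 ∈ J
  chain : List.Chain' (fun a b : MLetter r L => a.1.2 = b.1.1) (head :: tail)

/-- Canonical orthonormal basis index set: vacua `Ω₁,…,Ω_r` and the words. -/
abbrev MBasis (r : ℕ) (J : Set (Fin r × Fin r)) (L : Type*) := (Fin r) ⊕ (MWord r J L)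

/-- The matricially free Fock space of tracial type, `ℓ²` of the basis set. -/
abbrev MSpace (r : ℕ) (J : Set (Fin r × Fin r)) (L : Type*) :=
  lp (fun _ : MBasis r J L => ℂ) 2

/-- Canonical basis vector. -/
def mvec {r : ℕ} {J : Set (Fin r × Fin r)} {L : Type*} (i : MBasis r J L) : MSpace r J L := by
  classical exact lp.single 2 i 1

/-- The vacuum vector `Ω_q`. -/
def vac {r : ℕ} {J : Set (Fin r × Fin r)} {L : Type*} (q : Fin r) : MSpace r J L :=
  mvec (Sum.inl q)

/-- Basis vector of a word. -/
def wvec {r : ℕ} {J : Set (Fin r × Fin r)} {L : Type*} (w : MWord r J L) : MSpace r J L :=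
  mvec (Sum.inr w)

/-- The single-letter word. -/
def MWord.single {r : ℕ} {J : Set (Fin r × Fin r)} {L : Type*}
    (x : MLetter r L) (hx : x.1 ∈ J) : MWord r J L :=
  ⟨x, [], hx, (by intro y hy; cases hy), List.isChain_singleton _⟩

/-- Prepending a letter to a word. -/
def MWord.cons {r : ℕ} {J : Set (Fin r × Fin r)} {L : Type*}
    (x : MLetter r L) (hx : x.1 ∈ J) (w : MWord r J L)
    (hc : x.1.2 = w.head.1.1) : MWord r J L :=
  ⟨x, w.head :: w.tail, hx, by
      intro y hy
      rcases List.mem_cons.mp hy with h | h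
      · exact h ▸ w.headJ
      · exact w.tailJ y h,
    List.isChain_cons_cons.mpr ⟨hc, w.chain⟩⟩

/-- `T` is the matricially free creation operator `℘_{p,q}(l)` with covariance `b`:
it maps `Ω_q` to `√b·((p,q,l))`, each word starting with first index `q` to `√b` times the
word with `((p,q),l)` prepended, and all other canonical basis vectors to `0`. -/
def IsMFCreation {r : ℕ} {J : Set (Fin r × Fin r)} {L : Type*}
    (b : ℝ) (p q : Fin r) (l : L) (hpq : ((p, q) : Fin r × Fin r) ∈ J)
    (T : MSpace r J L →L[ℂ] MSpace r J L) : Prop :=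
  T (vac q) = (Real.sqrt b : ℂ) • wvec (MWord.single ((p, q), l) hpq) ∧
  (∀ q' : Fin r, q' ≠ q → T (vac q') = 0) ∧
  (∀ (w : MWord r J L) (h : w.head.1.1 = q),
      T (wvec w) = (Real.sqrt b : ℂ) • wvec (MWord.cons ((p, q), l) hpq w h.symm)) ∧
  (∀ w : MWord r J L, w.head.1.1 ≠ q → T (wvec w) = 0)

/-- The vector state `Ψ_q(a) = ⟨aΩ_q, Ω_q⟩`. -/
def PsiM {r : ℕ} {J : Set (Fin r × Fin r)} {L : Type*} (q : Fin r)
    (a : MSpace r J L →L[ℂ] MSpace r J L) : ℂ :=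
  @inner ℂ _ _ (vac q : MSpace r J L) (a (vac q))

end
noncomputable section

/-- Basis index set of the full Fock space over `I`: the vacuum and the nonempty words. -/
abbrev FBasis (I : Type*) := Unit ⊕ {w : List I // w ≠ []}

/-- The full Fock space over `I`, `ℓ²` of its canonical basis set. -/
abbrev FSpace (I : Type*) := lp (fun _ : FBasis I => ℂ) 2

/-- Canonical basis vector of the full Fock space. -/
def fvec {I : Type*} (i : FBasis I) : FSpace I := by
  classical exact lp.single 2 i 1

/-- The vacuum vector `δ_Ω`. -/
def fvac {I : Type*} : FSpace I := fvec (Sum.inl ())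

/-- The basis vector `δ_w` of a nonempty word `w`. -/
def fword {I : Type*} (w : List I) (hw : w ≠ []) : FSpace I := fvec (Sum.inr ⟨w, hw⟩)

/-- `T` is the free creation operator `ℓ(i)`: it sends `δ_Ω` to `δ_{(i)}` and each
word basis vector `δ_w` to `δ_{i·w}`. -/
def IsFreeCreation {I : Type*} (i : I) (T : FSpace I →L[ℂ] FSpace I) : Prop :=
  T fvac = fword [i] (by simp) ∧
  ∀ (w : List I) (hw : w ≠ []), T (fword w hw) = fword (i :: w) (by simp)

/-- The vacuum state `φ(a) = ⟨aδ_Ω, δ_Ω⟩` on the full Fock space. -/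
def fockState {I : Type*} (a : FSpace I →L[ℂ] FSpace I) : ℂ :=
  @inner ℂ _ _ (fvac : FSpace I) (a fvac)

/-- The Hilbert direct sum `F^{⊕r}` of `r` copies of the full Fock space. -/
abbrev FockR (r : ℕ) (I : Type*) := PiLp 2 (fun _ : Fin r => FSpace I)

instance pilp_completeSpace {ι : Type*} [Fintype ι] {E : ι → Type*}
    [∀ i, NormedAddCommGroup (E i)] [∀ i, CompleteSpace (E i)] :
    CompleteSpace (PiLp 2 E) :=
  inferInstance

/-- Tuple constructor for `F^{⊕r}`. -/
def tupOf {r : ℕ} {I : Type*} (f : Fin r → FSpace I) : FockR r I :=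
  (WithLp.equiv 2 (∀ _ : Fin r, FSpace I)).symm f

/-- Component of an element of `F^{⊕r}`. -/
def tupComp {r : ℕ} {I : Type*} (ξ : FockR r I) (k : Fin r) : FSpace I :=
  (WithLp.equiv 2 (∀ _ : Fin r, FSpace I)) ξ k

/-- `δ^{(q)}`, the tuple with `δ_Ω` in position `q` and `0` elsewhere. -/
def fockDelta {r : ℕ} {I : Type*} (q : Fin r) : FockR r I :=
  tupOf (fun k => if k = q then fvac else 0)

/-- The state `Φ_k(x) = ⟨x δ^{(k)}, δ^{(k)}⟩` on the bounded operators on `F^{⊕r}`. -/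
def PhiR {r : ℕ} {I : Type*} (k : Fin r) (x : FockR r I →L[ℂ] FockR r I) : ℂ :=
  @inner ℂ _ _ (fockDelta k : FockR r I) (x (fockDelta k))

end
/-- `x^ε` for `ε ∈ {1, *}`: `x^1 = x` (encoded `true`) and `x^* = adjoint x` (encoded `false`). -/
noncomputable def sOp {H : Type*} [NormedAddCommGroup H] [InnerProductSpace ℂ H]
    [CompleteSpace H] (ε : Bool) (x : H →L[ℂ] H) : H →L[ℂ] H :=
  if ε then x else ContinuousLinearMap.adjoint x

/-!
Both `c` and the standard circular operator `c₀` have the form `a(i) + a(j)*` for a family `a`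
satisfying the Cuntz–Toeplitz relations `a(i)* a(j) = δᵢⱼ` together with a unit vector `Ω`
killed by every `a(i)*`. For `c₀` this family is `ℓ(1), ℓ(2)` with `δ_Ω`; for `c` it is
`l ↦ Σ_{p,q} ℘_{p,q}(l)` (`l = u′, u″`) with any `Ω_q`, because `Σ_p b_{p,q}(u) = Σ_p d_p = 1`
makes the vectors `Σ_{p,q} ℘_{p,q}(l) e` (`e` a basis vector) orthonormal. Under these relations
`w ↦ a(w₁)⋯a(wₙ)Ω` intertwines `a(i)` and `a(i)*` with creation and annihilation on the
algebraic full Fock space, so every vacuum *-moment of `a(i) + a(j)*` is one and the same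
combinatorial quantity. Hence each `Ψ_q`, and so `Φ = Σ_q d_q Ψ_q`, gives `c` the *-moments
of `c₀`.
-/

open scoped InnerProductSpace
open ContinuousLinearMap (adjoint)

noncomputable section

section HilbertBasis

variable {β E : Type*} [NormedAddCommGroup E] [InnerProductSpace ℂ E]

theorem HilbertBasis.ext_inner (b : HilbertBasis β ℂ E) {x y : E}
    (h : ∀ k, ⟪b k, x⟫_ℂ = ⟪b k, y⟫_ℂ) : x = y :=
  b.repr.injective <| lp.ext <| funext fun k => by simpa only [b.repr_apply_apply] using h k

theorem HilbertBasis.ext_continuousLinearMap (b : HilbertBasis β ℂ E) {T S : E →L[ℂ] E}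
    (h : ∀ k, T (b k) = S (b k)) : T = S :=
  ContinuousLinearMap.ext_on (Submodule.dense_iff_topologicalClosure_eq_top.mpr b.dense_span)
    (by rintro _ ⟨k, rfl⟩; exact h k)

variable (β) in
def lpHilbertBasis : HilbertBasis β ℂ (lp (fun _ : β => ℂ) 2) := .ofRepr (.refl ℂ _)

theorem lpHilbertBasis_apply [DecidableEq β] (k : β) : lpHilbertBasis β k = lp.single 2 k 1 :=
  ((lpHilbertBasis β).repr_symm_single k).symm

theorem Orthonormal.sum_smul {P S : Type*} [Fintype P] {f : P × S → E} (hf : Orthonormal ℂ f)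
    {c : P → ℂ} (hc : ∑ p, ‖c p‖ ^ 2 = 1) : Orthonormal ℂ fun s => ∑ p, c p • f (p, s) := by
  classical
  rw [orthonormal_iff_ite] at hf ⊢
  intro s s'
  simp only [sum_inner, inner_sum, inner_smul_left, inner_smul_right, hf, Prod.mk.injEq,
    ite_and, mul_ite, mul_one, mul_zero, Finset.sum_ite_eq', Finset.mem_univ, if_true]
  split_ifs
  · simp_rw [RCLike.mul_conj]
    rw [← Complex.ofReal_one, ← hc]
    push_cast
    rfl
  · simp

end HilbertBasis

section CuntzToeplitz

variable {ι κ E : Type*} [NormedAddCommGroup E] [InnerProductSpace ℂ E] [CompleteSpace E]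

structure IsCuntzToeplitzVacuum (a : ι → E →L[ℂ] E) (Ω : E) : Prop where
  norm_vacuum : ‖Ω‖ = 1
  adjoint_mul_self : ∀ i, adjoint (a i) * a i = 1
  adjoint_mul_of_ne : ∀ i j, i ≠ j → adjoint (a i) * a j = 0
  adjoint_apply_vacuum : ∀ i, adjoint (a i) Ω = 0

theorem isCuntzToeplitzVacuum_of_orthonormal {β : Type*} (b : HilbertBasis β ℂ E)
    {a : ι → E →L[ℂ] E} {Ω : E} (hΩ : ‖Ω‖ = 1)
    (horth : Orthonormal ℂ fun x : ι × β => a x.1 (b x.2))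
    (hvac : ∀ i k, ⟪a i (b k), Ω⟫_ℂ = 0) : IsCuntzToeplitzVacuum a Ω := by
  classical
  have inner_adjoint_mul (i j k k') : ⟪b k', (adjoint (a i) * a j) (b k)⟫_ℂ =
      if (i, k') = (j, k) then 1 else 0 := by
    rw [mul_apply_eq_comp, ContinuousLinearMap.adjoint_inner_right]
    exact orthonormal_iff_ite.mp horth (i, k') (j, k)
  refine ⟨hΩ, fun i => b.ext_continuousLinearMap fun k => b.ext_inner fun k' => ?_,
    fun i j hij => b.ext_continuousLinearMap fun k => b.ext_inner fun k' => ?_,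
    fun i => b.ext_inner fun k => ?_⟩
  · rw [inner_adjoint_mul, one_apply_eq_self, orthonormal_iff_ite.mp b.orthonormal]
    simp
  · rw [inner_adjoint_mul, if_neg (by simp [hij])]
    simp
  · rw [ContinuousLinearMap.adjoint_inner_right, hvac, inner_zero_right]

theorem IsCuntzToeplitzVacuum.comp {a : ι → E →L[ℂ] E} {Ω : E} (h : IsCuntzToeplitzVacuum a Ω)
    {e : κ → ι} (he : Function.Injective e) : IsCuntzToeplitzVacuum (fun l => a (e l)) Ω :=
  ⟨h.norm_vacuum, fun l => h.adjoint_mul_self (e l),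
    fun _ _ hll' => h.adjoint_mul_of_ne _ _ (he.ne hll'), fun l => h.adjoint_apply_vacuum (e l)⟩

end CuntzToeplitz

namespace FockModel

variable {ι : Type*}

def create (i : ι) : Module.End ℂ (List ι →₀ ℂ) := Finsupp.lmapDomain ℂ ℂ (List.cons i)

def annihilate (i : ι) : Module.End ℂ (List ι →₀ ℂ) :=
  Finsupp.lcomapDomain (List.cons i) List.cons_injective

theorem create_single (i : ι) (w : List ι) (c : ℂ) :
    create i (Finsupp.single w c) = Finsupp.single (i :: w) c := by
  simp [create]

theorem annihilate_single_nil (i : ι) (c : ℂ) : annihilate i (Finsupp.single [] c) = 0 := by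
  ext w
  simp [annihilate]

theorem annihilate_single_cons_self (i : ι) (w : List ι) (c : ℂ) :
    annihilate i (Finsupp.single (i :: w) c) = Finsupp.single w c := by
  simp [annihilate]

theorem annihilate_single_cons_of_ne {i j : ι} (hij : i ≠ j) (w : List ι) (c : ℂ) :
    annihilate i (Finsupp.single (j :: w) c) = 0 := by
  ext w'
  simp [annihilate, Ne.symm hij]

/-- The model of `c^ε` for `c = ℓ(i) + ℓ(j)*`, with `ε` encoded as in `sOp`. -/
def circular (i j : ι) : Bool → Module.End ℂ (List ι →₀ ℂ)
  | true => create i + annihilate j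
  | false => create j + annihilate i

def circularMoment (i j : ι) {m : ℕ} (ε : Fin m → Bool) : ℂ :=
  (List.ofFn fun k => circular i j (ε k)).prod (Finsupp.single [] 1) []

end FockModel

theorem List.prod_map_apply_of_intertwines {β M E : Type*} [AddCommMonoid M] [Module ℂ M]
    [NormedAddCommGroup E] [InnerProductSpace ℂ E] (V : M →ₗ[ℂ] E) {T : β → E →L[ℂ] E}
    {S : β → Module.End ℂ M} (h : ∀ b x, T b (V x) = V (S b x)) (l : List β) (x : M) :
    (l.map T).prod (V x) = V ((l.map S).prod x) := by
  induction l with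
  | nil => rfl
  | cons b l ih =>
    simp only [List.map_cons, List.prod_cons, mul_apply_eq_comp, Module.End.mul_apply, ih, h]

section FockEmbedding

variable {ι E : Type*} [NormedAddCommGroup E] [InnerProductSpace ℂ E]
  {a : ι → E →L[ℂ] E} {Ω : E}

variable (a Ω) in
def fockEmbedding : (List ι →₀ ℂ) →ₗ[ℂ] E :=
  Finsupp.linearCombination ℂ fun w => (w.map a).prod Ω

theorem fockEmbedding_single (w : List ι) (c : ℂ) :
    fockEmbedding a Ω (Finsupp.single w c) = c • (w.map a).prod Ω :=
  Finsupp.linearCombination_single ℂ c w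

theorem apply_fockEmbedding (i : ι) (x : List ι →₀ ℂ) :
    a i (fockEmbedding a Ω x) = fockEmbedding a Ω (FockModel.create i x) := by
  induction x using Finsupp.induction_linear with
  | zero => simp
  | add x y hx hy => simp only [map_add, hx, hy]
  | single w c => simp [fockEmbedding_single, FockModel.create_single]

namespace IsCuntzToeplitzVacuum

variable [CompleteSpace E]

theorem adjoint_apply_fockEmbedding (h : IsCuntzToeplitzVacuum a Ω) (i : ι)
    (x : List ι →₀ ℂ) :
    adjoint (a i) (fockEmbedding a Ω x) = fockEmbedding a Ω (FockModel.annihilate i x) := by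
  induction x using Finsupp.induction_linear with
  | zero => simp
  | add x y hx hy => simp only [map_add, hx, hy]
  | single w c =>
    rcases w with _ | ⟨j, w⟩
    · simp [fockEmbedding_single, FockModel.annihilate_single_nil, h.adjoint_apply_vacuum]
    · rw [fockEmbedding_single, map_smul, List.map_cons, List.prod_cons, mul_apply_eq_comp,
        ← mul_apply_eq_comp (adjoint (a i))]
      obtain rfl | hij := eq_or_ne i j
      · rw [h.adjoint_mul_self, one_apply_eq_self, FockModel.annihilate_single_cons_self,
          fockEmbedding_single]
      · rw [h.adjoint_mul_of_ne i j hij, FockModel.annihilate_single_cons_of_ne hij]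
        simp

theorem inner_fockEmbedding (h : IsCuntzToeplitzVacuum a Ω) (x : List ι →₀ ℂ) :
    ⟪Ω, fockEmbedding a Ω x⟫_ℂ = x [] := by
  induction x using Finsupp.induction_linear with
  | zero => simp
  | add x y hx hy => simp only [map_add, inner_add_right, hx, hy, Finsupp.add_apply]
  | single w c =>
    rw [fockEmbedding_single, inner_smul_right]
    rcases w with _ | ⟨j, w⟩
    · simp [inner_self_eq_norm_sq_to_K, h.norm_vacuum]
    · rw [List.map_cons, List.prod_cons, mul_apply_eq_comp,
        ← ContinuousLinearMap.adjoint_inner_left, h.adjoint_apply_vacuum]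
      simp

theorem sOp_apply_fockEmbedding (h : IsCuntzToeplitzVacuum a Ω) (i j : ι) (ε : Bool)
    (x : List ι →₀ ℂ) :
    sOp ε (a i + adjoint (a j)) (fockEmbedding a Ω x)
      = fockEmbedding a Ω (FockModel.circular i j ε x) := by
  cases ε
  · simp [sOp, FockModel.circular, apply_fockEmbedding, h.adjoint_apply_fockEmbedding, add_comm]
  · simp [sOp, FockModel.circular, apply_fockEmbedding, h.adjoint_apply_fockEmbedding]

theorem inner_prod_sOp_apply_vacuum (h : IsCuntzToeplitzVacuum a Ω) (i j : ι) {m : ℕ}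
    (ε : Fin m → Bool) :
    ⟪Ω, (List.ofFn fun k => sOp (ε k) (a i + adjoint (a j))).prod Ω⟫_ℂ
      = FockModel.circularMoment i j ε := by
  have hΩ : fockEmbedding a Ω (Finsupp.single [] 1) = Ω := by simp [fockEmbedding_single]
  have key := List.prod_map_apply_of_intertwines (fockEmbedding a Ω)
    (h.sOp_apply_fockEmbedding i j) (List.ofFn ε) (Finsupp.single [] 1)
  rw [List.map_ofFn, List.map_ofFn, hΩ] at key
  rw [FockModel.circularMoment, ← h.inner_fockEmbedding]
  exact congrArg _ key

end IsCuntzToeplitzVacuum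

end FockEmbedding

section MatriciallyFree

variable {r : ℕ} {J : Set (Fin r × Fin r)} {L : Type*}

theorem MWord.ext {w w' : MWord r J L} (hhead : w.head = w'.head) (htail : w.tail = w'.tail) :
    w = w' := by
  cases w; cases w'; cases hhead; cases htail; rfl

def MBasis.firstIndex : MBasis r J L → Fin r
  | .inl q => q
  | .inr w => w.head.1.1

def MBasis.prepend (x : MLetter r L) (hx : x.1 ∈ J) :
    (k : MBasis r J L) → x.1.2 = k.firstIndex → MWord r J L
  | .inl _, _ => MWord.single x hx
  | .inr w, h => MWord.cons x hx w h

theorem MBasis.prepend_inj {x x' : MLetter r L} {hx : x.1 ∈ J} {hx' : x'.1 ∈ J}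
    {k k' : MBasis r J L} {h : x.1.2 = k.firstIndex} {h' : x'.1.2 = k'.firstIndex}
    (he : k.prepend x hx h = k'.prepend x' hx' h') : x = x' ∧ k = k' := by
  have hhead := congrArg MWord.head he
  have htail := congrArg MWord.tail he
  rcases k with q | w <;> rcases k' with q' | w' <;>
    simp only [prepend, MWord.single, MWord.cons, List.cons.injEq, reduceCtorEq] at hhead htail
  · subst hhead
    exact ⟨rfl, congrArg Sum.inl (h.symm.trans h')⟩
  · exact ⟨hhead, congrArg Sum.inr (MWord.ext htail.1 htail.2)⟩

theorem mvec_eq_lpHilbertBasis : (mvec : MBasis r J L → MSpace r J L) = lpHilbertBasis _ := by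
  classical
  funext k
  rw [lpHilbertBasis_apply, mvec]

theorem orthonormal_mvec : Orthonormal ℂ (mvec : MBasis r J L → MSpace r J L) := by
  rw [mvec_eq_lpHilbertBasis]
  exact HilbertBasis.orthonormal _

variable {b : ℝ} {p q : Fin r} {l : L} {hpq : (p, q) ∈ J} {T : MSpace r J L →L[ℂ] MSpace r J L}

theorem IsMFCreation.apply_mvec_of_firstIndex_eq (hT : IsMFCreation b p q l hpq T)
    {k : MBasis r J L} (h : k.firstIndex = q) :
    T (mvec k) = (Real.sqrt b : ℂ) • wvec (k.prepend ((p, q), l) hpq h.symm) := by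
  rcases k with q' | w
  · subst h
    exact hT.1
  · exact hT.2.2.1 w h

theorem IsMFCreation.apply_mvec_of_firstIndex_ne (hT : IsMFCreation b p q l hpq T)
    {k : MBasis r J L} (h : k.firstIndex ≠ q) : T (mvec k) = 0 := by
  rcases k with q' | w
  · exact hT.2.1 q' h
  · exact hT.2.2.2 w h

end MatriciallyFree

section TracialType

variable {r : ℕ} {L : Type*}

def mfCreationSum (C : Fin r → Fin r → L → (MSpace r Set.univ L →L[ℂ] MSpace r Set.univ L))
    (l : L) : MSpace r Set.univ L →L[ℂ] MSpace r Set.univ L :=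
  ∑ pq : Fin r × Fin r, C pq.1 pq.2 l

theorem sum_add_adjoint_eq_mfCreationSum
    (C : Fin r → Fin r → L → (MSpace r Set.univ L →L[ℂ] MSpace r Set.univ L)) (l l' : L) :
    ∑ pq : Fin r × Fin r, (C pq.1 pq.2 l + adjoint (C pq.2 pq.1 l'))
      = mfCreationSum C l + adjoint (mfCreationSum C l') := by
  rw [Finset.sum_add_distrib, mfCreationSum, mfCreationSum, map_sum]
  congr 1
  exact Fintype.sum_equiv (Equiv.prodComm _ _) _ _ fun _ => rfl

variable {d : Fin r → ℝ}
  {C : Fin r → Fin r → L → (MSpace r Set.univ L →L[ℂ] MSpace r Set.univ L)}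

theorem mfCreationSum_apply_mvec
    (hC : ∀ p q l, IsMFCreation (d p) p q l (Set.mem_univ _) (C p q l))
    (l : L) (k : MBasis r Set.univ L) :
    mfCreationSum C l (mvec k) = ∑ p, (Real.sqrt (d p) : ℂ) •
      wvec (k.prepend ((p, k.firstIndex), l) (Set.mem_univ _) rfl) := by
  rw [mfCreationSum, sum_apply, Fintype.sum_prod_type]
  refine Finset.sum_congr rfl fun p _ => ?_
  rw [Finset.sum_eq_single_of_mem k.firstIndex (Finset.mem_univ _)
    fun q _ hq => (hC p q l).apply_mvec_of_firstIndex_ne hq.symm]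
  exact (hC p _ l).apply_mvec_of_firstIndex_eq rfl

theorem orthonormal_mfCreationSum_apply_mvec (hd : ∀ p, 0 ≤ d p) (hsum : ∑ p, d p = 1)
    (hC : ∀ p q l, IsMFCreation (d p) p q l (Set.mem_univ _) (C p q l)) :
    Orthonormal ℂ fun x : L × MBasis r Set.univ L => mfCreationSum C x.1 (mvec x.2) := by
  have hwords : Orthonormal ℂ fun y : Fin r × L × MBasis r Set.univ L =>
      wvec (y.2.2.prepend ((y.1, y.2.2.firstIndex), y.2.1) (Set.mem_univ _) rfl) := by
    refine orthonormal_mvec.comp _ (Sum.inr_injective.comp fun y y' he => ?_)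
    obtain ⟨hx, hk⟩ := MBasis.prepend_inj he
    simp only [Prod.mk.injEq] at hx
    exact Prod.ext hx.1.1 (Prod.ext hx.2 hk)
  simp_rw [mfCreationSum_apply_mvec hC]
  refine hwords.sum_smul ?_
  simp_rw [Complex.norm_real, Real.norm_eq_abs, sq_abs, Real.sq_sqrt (hd _), hsum]

theorem isCuntzToeplitzVacuum_mfCreationSum (hd : ∀ p, 0 ≤ d p) (hsum : ∑ p, d p = 1)
    (hC : ∀ p q l, IsMFCreation (d p) p q l (Set.mem_univ _) (C p q l)) (q : Fin r) :
    IsCuntzToeplitzVacuum (mfCreationSum C) (vac q) := by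
  refine isCuntzToeplitzVacuum_of_orthonormal (lpHilbertBasis _) (orthonormal_mvec.1 _) ?_ ?_
  · rw [← mvec_eq_lpHilbertBasis]
    exact orthonormal_mfCreationSum_apply_mvec hd hsum hC
  · intro l k
    rw [← mvec_eq_lpHilbertBasis, mfCreationSum_apply_mvec hC, sum_inner]
    refine Finset.sum_eq_zero fun p _ => ?_
    rw [inner_smul_left, wvec, vac, orthonormal_mvec.2 Sum.inr_ne_inl, mul_zero]

end TracialType

section FullFock

variable {I : Type*}

def FBasis.cons (i : I) : FBasis I → {w : List I // w ≠ []}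
  | .inl _ => ⟨[i], List.cons_ne_nil _ _⟩
  | .inr w => ⟨i :: w.1, List.cons_ne_nil _ _⟩

theorem FBasis.cons_injective : Function.Injective fun x : I × FBasis I => x.2.cons x.1 := by
  rintro ⟨i, _ | ⟨w, hw⟩⟩ ⟨i', _ | ⟨w', hw'⟩⟩ he <;> simp_all [FBasis.cons]

theorem IsFreeCreation.apply_fvec {i : I} {T : FSpace I →L[ℂ] FSpace I}
    (hT : IsFreeCreation i T) (k : FBasis I) : T (fvec k) = fvec (.inr (k.cons i)) := by
  rcases k with _ | ⟨w, hw⟩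
  · exact hT.1
  · exact hT.2 w hw

theorem fvec_eq_lpHilbertBasis : (fvec : FBasis I → FSpace I) = lpHilbertBasis _ := by
  classical
  funext k
  rw [lpHilbertBasis_apply, fvec]

theorem isCuntzToeplitzVacuum_of_isFreeCreation {ell : I → FSpace I →L[ℂ] FSpace I}
    (hell : ∀ i, IsFreeCreation i (ell i)) : IsCuntzToeplitzVacuum ell fvac := by
  have horth : Orthonormal ℂ (fvec : FBasis I → FSpace I) := by
    rw [fvec_eq_lpHilbertBasis]
    exact HilbertBasis.orthonormal _
  refine isCuntzToeplitzVacuum_of_orthonormal (lpHilbertBasis _) (horth.1 _) ?_ ?_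
  · rw [← fvec_eq_lpHilbertBasis]
    simp_rw [(hell _).apply_fvec]
    exact horth.comp _ (Sum.inr_injective.comp FBasis.cons_injective)
  · intro i k
    rw [← fvec_eq_lpHilbertBasis, (hell i).apply_fvec, fvac]
    exact horth.2 Sum.inr_ne_inl

end FullFock

end

theorem sumMatricialRCircular_is_standard_circular_general
    (r : ℕ) (d : Fin r → ℝ) (hd : ∀ p, 0 ≤ d p) (hsum : ∑ p, d p = 1)
    (C : (p q : Fin r) → (Unit ⊕ Unit) →
      (MSpace r Set.univ (Unit ⊕ Unit) →L[ℂ] MSpace r Set.univ (Unit ⊕ Unit)))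
    (hC : ∀ p q l, IsMFCreation (d p) p q l (Set.mem_univ _) (C p q l))
    (ell₀ : Fin 2 → (FSpace (Fin 2) →L[ℂ] FSpace (Fin 2)))
    (hell₀ : ∀ i, IsFreeCreation i (ell₀ i)) :
    ∀ (m : ℕ), 1 ≤ m → ∀ (ε : Fin m → Bool),
      (∑ q : Fin r, (d q : ℂ) *
        PsiM q (List.ofFn (fun j => sOp (ε j)
          (∑ pq : Fin r × Fin r,
            (C pq.1 pq.2 (Sum.inl ()) +
              ContinuousLinearMap.adjoint (C pq.2 pq.1 (Sum.inr ())))))).prod)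
      = fockState (List.ofFn (fun j => sOp (ε j)
          (ell₀ 0 + ContinuousLinearMap.adjoint (ell₀ 1)))).prod := by
  intro m _ ε
  have hFock : IsCuntzToeplitzVacuum
      (fun l : Unit ⊕ Unit => ell₀ (Sum.elim (fun _ => 0) (fun _ => 1) l)) fvac :=
    (isCuntzToeplitzVacuum_of_isFreeCreation hell₀).comp (by decide)
  have hMF (q : Fin r) : IsCuntzToeplitzVacuum (mfCreationSum C) (vac q) :=
    isCuntzToeplitzVacuum_mfCreationSum hd hsum hC q
  simp only [sum_add_adjoint_eq_mfCreationSum, PsiM, (hMF _).inner_prod_sOp_apply_vacuum]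
  rw [← Finset.sum_mul, ← Complex.ofReal_sum, hsum, Complex.ofReal_one, one_mul, fockState]
  exact (hFock.inner_prod_sOp_apply_vacuum (Sum.inl ()) (Sum.inr ()) ε).symm

/-- if `U = {u}` is a singleton and `b_{p,q}(u) = d_p` with `Σ_p d_p = 1`,
`d_p ≥ 0`, then `c = Σ_{p,q} ζ_{p,q}(u)` is a standard circular element with respect to
`Φ = Σ_q d_q·Ψ_q`: its *-moments agree with those of a standard circular operator
`c₀ = ℓ(i₁) + ℓ(i₂)*` in the vacuum state on the full Fock space over a two-element set. -/
theorem sumMatricialRCircular_is_standard_circular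
    (r : ℕ) (hr : 1 ≤ r) (d : Fin r → ℝ) (hd : ∀ p, 0 ≤ d p) (hsum : ∑ p, d p = 1)
    (C : (p q : Fin r) → (Unit ⊕ Unit) →
      (MSpace r Set.univ (Unit ⊕ Unit) →L[ℂ] MSpace r Set.univ (Unit ⊕ Unit)))
    (hC : ∀ p q l, IsMFCreation (d p) p q l (Set.mem_univ _) (C p q l))
    (ell₀ : Fin 2 → (FSpace (Fin 2) →L[ℂ] FSpace (Fin 2)))
    (hell₀ : ∀ i, IsFreeCreation i (ell₀ i)) :
    ∀ (m : ℕ), 1 ≤ m → ∀ (ε : Fin m → Bool),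
      (∑ q : Fin r, (d q : ℂ) *
        PsiM q (List.ofFn (fun j => sOp (ε j)
          (∑ pq : Fin r × Fin r,
            (C pq.1 pq.2 (Sum.inl ()) +
              ContinuousLinearMap.adjoint (C pq.2 pq.1 (Sum.inr ())))))).prod)
      = fockState (List.ofFn (fun j => sOp (ε j)
          (ell₀ 0 + ContinuousLinearMap.adjoint (ell₀ 1)))).prod :=
  sumMatricialRCircular_is_standard_circular_general r d hd hsum C hC ell₀ hell₀
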